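/- arXiv:2202.01746 — 3 statements merged into one kernel-verified Lean document; each statement's English description precedes it below -/
import Mathlib

section
/- For all n ≥ 2, the number of spanning trees of the fan graph F_n equals the Fibonacci number f_{2(n-1)}, where f_1 = f_2 = 1. -/
open SimpleGraph

/-- The fan graph on `n` vertices: vertex `0` is the hub `v_∞`, and vertices
`1, …, n-1` (representing `v_2, …, v_n`) form a path, each joined to the hub. -/
def fanGraph (n : ℕ) : SimpleGraph (Fin n) :=
  SimpleGraph.fromRel (fun i j =>
    ((i : ℕ) = 0 ∧ (j : ℕ) ≠ 0) ∨ ((i : ℕ) ≠ 0 ∧ (i : ℕ) + 1 = (j : ℕ)))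

/-- `T` is a spanning tree of `G`: a subgraph (on the same vertex set) that is a tree. -/
def IsSpanningTree {V : Type*} (G T : SimpleGraph V) : Prop :=
  T ≤ G ∧ T.IsTree

/-- The number of spanning trees of the fan graph `F_n`. -/
noncomputable def numSpanningTrees (n : ℕ) : ℕ :=
  Nat.card {T : SimpleGraph (Fin n) // IsSpanningTree (fanGraph n) T}

/-!
A subgraph `T` of the fan is determined by the spokes `v_∞ v_j` and the path edges `v_j v_{j+1}`
it keeps. The kept path edges cut the path into blocks of consecutive vertices, and `T` is a
spanning tree exactly when every block carries exactly one spoke: a block without a spoke is cut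
off from the hub, and two spokes into one block close a cycle through the hub.

Read along the path, this condition is recognised by an automaton whose live states record
whether the current block already has its spoke. Its transfer matrix `[[2, 1], [1, 1]]` is the
square of the Fibonacci matrix, so words of length `k` lead from the start to the two live
states in `f_{2k+1}` and `f_{2k}` ways; closing the last block gives `f_{2k+1} + f_{2k} = f_{2k+2}`
spanning trees of `F_{k+2}`.
-/

namespace DFA

variable {α σ : Type*} [Fintype α] [DecidableEq σ] (M : DFA α σ)

def wordCount : ℕ → σ → σ → ℕ
  | 0, s, r => if s = r then 1 else 0
  | k + 1, s, r => ∑ a, wordCount k (M.step s a) r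

theorem card_evalFrom_eq_wordCount (k : ℕ) (s r : σ) :
    Nat.card {w : Fin k → α // M.evalFrom s (List.ofFn w) = r} = M.wordCount k s r := by
  induction k generalizing s with
  | zero => by_cases h : s = r <;> simp [wordCount, h]
  | succ k ih =>
    let e : {w : Fin (k + 1) → α // M.evalFrom s (List.ofFn w) = r} ≃
        Σ a, {w : Fin k → α // M.evalFrom (M.step s a) (List.ofFn w) = r} :=
      { toFun w := ⟨w.1 0, fun i => w.1 i.succ, by simpa [List.ofFn_succ] using w.2⟩
        invFun w := ⟨Fin.cons w.1 w.2.1, by simpa [List.ofFn_succ] using w.2.2⟩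
        left_inv w := Subtype.ext (Fin.cons_self_tail w.1)
        right_inv _ := rfl }
    rw [Nat.card_congr e, Nat.card_sigma]
    simp only [ih, wordCount]

end DFA

theorem SimpleGraph.Reachable.mem_of_adj_mem {V : Type*} {G : SimpleGraph V} {s : Set V}
    (hs : ∀ u v, u ∈ s → G.Adj u v → v ∈ s) {u v : V} (h : G.Reachable u v) (hu : u ∈ s) :
    v ∈ s := by
  by_contra hv
  obtain ⟨p⟩ := h
  obtain ⟨d, -, hd, hd'⟩ := p.exists_boundary_dart s hu hv
  exact hd' (hs _ _ hd d.adj)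

namespace FanGraph

def SameBlock (B : ℕ → Prop) (i j : ℕ) : Prop :=
  ∀ l, min i j ≤ l → l < max i j → B l

namespace SameBlock

variable {B B' : ℕ → Prop} {i j l : ℕ}

theorem refl (B : ℕ → Prop) (i : ℕ) : SameBlock B i i := fun l h₁ h₂ => by omega

theorem symm (h : SameBlock B i j) : SameBlock B j i := by
  simpa only [SameBlock, min_comm, max_comm] using h

theorem trans (hij : SameBlock B i j) (hjl : SameBlock B j l) : SameBlock B i l := by
  intro x h₁ h₂
  by_cases hx : min i j ≤ x ∧ x < max i j
  · exact hij x hx.1 hx.2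
  · exact hjl x (by omega) (by omega)

theorem mono (h : SameBlock B i j) (hB : ∀ l, B l → B' l) : SameBlock B' i j :=
  fun l h₁ h₂ => hB l (h l h₁ h₂)

end SameBlock

def OneSpokePerBlock (S B : ℕ → Prop) (m : ℕ) : Prop :=
  ∀ p < m, ∃! i, SameBlock B i p ∧ S i

section Subgraph

variable {m : ℕ} {T : SimpleGraph (Fin (m + 1))}

-- Path position `p` is the vertex `p + 1`; vertex `0` is the hub.
def SpokeAt (T : SimpleGraph (Fin (m + 1))) (p : ℕ) : Prop :=
  ∃ v : Fin (m + 1), (v : ℕ) = p + 1 ∧ T.Adj 0 v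

def LinkAt (T : SimpleGraph (Fin (m + 1))) (p : ℕ) : Prop :=
  ∃ u v : Fin (m + 1), (u : ℕ) = p + 1 ∧ (v : ℕ) = p + 2 ∧ T.Adj u v

theorem fanGraph_adj_iff {u v : Fin (m + 1)} :
    (fanGraph (m + 1)).Adj u v ↔
      ((u : ℕ) = 0 ∧ (v : ℕ) ≠ 0) ∨ ((v : ℕ) = 0 ∧ (u : ℕ) ≠ 0) ∨
      ((u : ℕ) ≠ 0 ∧ (u : ℕ) + 1 = v) ∨ ((v : ℕ) ≠ 0 ∧ (v : ℕ) + 1 = u) := by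
  simp only [fanGraph, fromRel_adj, ne_eq, Fin.ext_iff]
  omega

theorem spokeAt_of_adj {v : Fin (m + 1)} (hv : (v : ℕ) ≠ 0) (h : T.Adj 0 v) :
    SpokeAt T (v - 1) :=
  ⟨v, by omega, h⟩

theorem sameBlock_of_adj (hT : T ≤ fanGraph (m + 1)) {u v : Fin (m + 1)} (h : T.Adj u v)
    (hu : (u : ℕ) ≠ 0) (hv : (v : ℕ) ≠ 0) : SameBlock (LinkAt T) (u - 1) (v - 1) := by
  intro l hl₁ hl₂
  rcases fanGraph_adj_iff.1 (hT h) with h' | h' | h' | h'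
  · omega
  · omega
  · exact ⟨u, v, by omega, by omega, h⟩
  · exact ⟨v, u, by omega, by omega, h.symm⟩

theorem reachable_of_sameBlock {u v : Fin (m + 1)} (hu : (u : ℕ) ≠ 0) (hv : (v : ℕ) ≠ 0)
    (h : SameBlock (LinkAt T) (u - 1) (v - 1)) : T.Reachable u v := by
  wlog huv : u ≤ v generalizing u v
  · exact (this hv hu h.symm (le_of_not_ge huv)).symm
  obtain ⟨d, hd⟩ : ∃ d, (v : ℕ) = u + d := ⟨v - u, by omega⟩
  induction d generalizing v with
  | zero => rw [show v = u from Fin.ext hd]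
  | succ d ih =>
    have := v.isLt
    obtain ⟨a, b, ha, hb, hab⟩ := h (u + d - 1) (by omega) (by omega)
    obtain rfl : v = b := Fin.ext (by omega)
    refine (ih (v := a) (by omega) (fun l h₁ h₂ => h l (by omega) (by omega))
      (Fin.le_def.2 (by omega)) (by omega)).trans hab.reachable

theorem exists_spokeAt_of_reachable (hT : T ≤ fanGraph (m + 1)) {j w : Fin (m + 1)}
    (hj : (j : ℕ) ≠ 0) (hjw : T.Reachable j w)
    (hw : (w : ℕ) ≠ 0 → ¬ SameBlock (LinkAt T) (w - 1) (j - 1)) :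
    ∃ i, SameBlock (LinkAt T) i (j - 1) ∧ SpokeAt T i := by
  by_contra hno
  push Not at hno
  let s : Set (Fin (m + 1)) := {v | (v : ℕ) ≠ 0 ∧ SameBlock (LinkAt T) (v - 1) (j - 1)}
  have hclosed : ∀ u v, u ∈ s → T.Adj u v → v ∈ s := by
    rintro u v ⟨hu, hblock⟩ huv
    by_cases hv : (v : ℕ) = 0
    · obtain rfl : v = 0 := Fin.ext hv
      exact absurd (spokeAt_of_adj hu huv.symm) (hno _ hblock)
    · exact ⟨hv, (sameBlock_of_adj hT huv hu hv).symm.trans hblock⟩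
  obtain ⟨hw₀, hwj⟩ := hjw.mem_of_adj_mem hclosed ⟨hj, .refl _ _⟩
  exact hw hw₀ hwj

theorem SpokeAt.mono {T' : SimpleGraph (Fin (m + 1))} (hle : T' ≤ T) {p : ℕ}
    (h : SpokeAt T' p) : SpokeAt T p :=
  let ⟨v, hv, hadj⟩ := h
  ⟨v, hv, hle hadj⟩

theorem LinkAt.mono {T' : SimpleGraph (Fin (m + 1))} (hle : T' ≤ T) {p : ℕ}
    (h : LinkAt T' p) : LinkAt T p :=
  let ⟨u, v, hu, hv, hadj⟩ := h
  ⟨u, v, hu, hv, hle hadj⟩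

theorem reachable_zero_iff (hT : T ≤ fanGraph (m + 1)) {j : Fin (m + 1)} (hj : (j : ℕ) ≠ 0) :
    T.Reachable 0 j ↔ ∃ i, SameBlock (LinkAt T) i (j - 1) ∧ SpokeAt T i := by
  constructor
  · intro h
    exact exists_spokeAt_of_reachable hT hj h.symm (fun h₀ => absurd h₀ (by simp))
  · rintro ⟨i, hblock, v, hv, hadj⟩
    refine hadj.reachable.trans (reachable_of_sameBlock (by omega) hj ?_)
    rwa [show (v : ℕ) - 1 = i by omega]

theorem connected_iff_forall_exists_spokeAt (hT : T ≤ fanGraph (m + 1)) :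
    T.Connected ↔ ∀ p < m, ∃ i, SameBlock (LinkAt T) i p ∧ SpokeAt T i := by
  rw [connected_iff_exists_forall_reachable]
  constructor
  · rintro ⟨r, hr⟩ p hp
    simpa using (reachable_zero_iff hT (j := ⟨p + 1, by omega⟩) (by simp)).1
      ((hr 0).symm.trans (hr _))
  · refine fun h => ⟨0, fun j => ?_⟩
    by_cases hj : (j : ℕ) = 0
    · rw [show j = 0 from Fin.ext hj]
    · exact (reachable_zero_iff hT hj).2 (h _ (by omega))

theorem eq_of_sameBlock_of_isAcyclic (hT : T.IsAcyclic) {i i' : ℕ}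
    (hb : SameBlock (LinkAt T) i i') (hi : SpokeAt T i) (hi' : SpokeAt T i') : i = i' := by
  obtain ⟨a, ha, hadj⟩ := hi
  obtain ⟨a', ha', hadj'⟩ := hi'
  by_contra hne
  refine isBridge_iff.1 (isAcyclic_iff_forall_adj_isBridge.1 hT hadj) ?_
  have hlink : ∀ l, LinkAt T l → LinkAt (T.deleteEdges {s(0, a)}) l := by
    rintro l ⟨b, c, hb, hc, hbc⟩
    refine ⟨b, c, hb, hc, deleteEdges_adj.2 ⟨hbc, fun hmem => ?_⟩⟩
    rcases Sym2.eq_iff.1 (Set.mem_singleton_iff.1 hmem) with ⟨h₁, -⟩ | ⟨-, h₁⟩ <;>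
      simp only [Fin.ext_iff, Fin.val_zero] at h₁ <;> omega
  have hadj'' : (T.deleteEdges {s(0, a)}).Adj 0 a' := by
    refine deleteEdges_adj.2 ⟨hadj', fun hmem => hne ?_⟩
    rcases Sym2.eq_iff.1 (Set.mem_singleton_iff.1 hmem) with ⟨-, h₁⟩ | ⟨h₁, -⟩ <;>
      simp only [Fin.ext_iff, Fin.val_zero] at h₁ <;> omega
  refine hadj''.reachable.trans (reachable_of_sameBlock (by omega) (by omega) ?_)
  rw [show (a' : ℕ) - 1 = i' by omega, show (a : ℕ) - 1 = i by omega]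
  exact hb.symm.mono hlink

theorem isBridge_spoke (hT : T ≤ fanGraph (m + 1)) (h : OneSpokePerBlock (SpokeAt T) (LinkAt T) m)
    {v : Fin (m + 1)} (hadj : T.Adj 0 v) : T.IsBridge s(0, v) := by
  have hv : (v : ℕ) ≠ 0 := fun h₀ => hadj.ne (Fin.ext h₀.symm)
  intro hr
  obtain ⟨i, hblock, w, hw, hadj'⟩ :=
    (reachable_zero_iff ((deleteEdges_le _).trans hT) hv).1 hr
  rw [deleteEdges_adj] at hadj'
  have hwv : w ≠ v := by
    rintro rfl
    simp at hadj'
  have := (h (v - 1) (by omega)).unique ⟨hblock.mono fun _ => LinkAt.mono (deleteEdges_le _),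
    ⟨w, hw, hadj'.1⟩⟩ ⟨.refl _ _, spokeAt_of_adj hv hadj⟩
  exact hwv (Fin.ext (by omega))

theorem isBridge_link (hT : T ≤ fanGraph (m + 1)) (h : OneSpokePerBlock (SpokeAt T) (LinkAt T) m)
    {u v : Fin (m + 1)} (hu : (u : ℕ) ≠ 0) (huv : (u : ℕ) + 1 = v) (hadj : T.Adj u v) :
    T.IsBridge s(u, v) := by
  have := v.isLt
  intro hr
  have hle : T.deleteEdges {s(u, v)} ≤ T := deleteEdges_le _
  have hcut : ¬ SameBlock (LinkAt (T.deleteEdges {s(u, v)})) (u - 1) (v - 1) := by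
    intro hb
    obtain ⟨a, b, ha, hb, hab⟩ := hb (u - 1) (by omega) (by omega)
    obtain rfl : a = u := Fin.ext (by omega)
    obtain rfl : b = v := Fin.ext (by omega)
    simp at hab
  obtain ⟨i₁, hb₁, hs₁⟩ :=
    exists_spokeAt_of_reachable (hle.trans hT) hu hr fun _ hb => hcut hb.symm
  obtain ⟨i₂, hb₂, hs₂⟩ :=
    exists_spokeAt_of_reachable (hle.trans hT) (j := v) (by omega) hr.symm fun _ hb => hcut hb
  have huv' : SameBlock (LinkAt T) (v - 1) (u - 1) := (sameBlock_of_adj hT hadj hu (by omega)).symm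
  obtain rfl : i₁ = i₂ := (h (u - 1) (by omega)).unique
    ⟨hb₁.mono fun _ => LinkAt.mono hle, hs₁.mono hle⟩
    ⟨(hb₂.mono fun _ => LinkAt.mono hle).trans huv', hs₂.mono hle⟩
  exact hcut (hb₁.symm.trans hb₂)

theorem isAcyclic_of_oneSpokePerBlock (hT : T ≤ fanGraph (m + 1))
    (h : OneSpokePerBlock (SpokeAt T) (LinkAt T) m) : T.IsAcyclic := by
  refine isAcyclic_iff_forall_adj_isBridge.2 fun u v hadj => ?_
  rcases fanGraph_adj_iff.1 (hT hadj) with ⟨hu, -⟩ | ⟨hv, -⟩ | ⟨hu, huv⟩ | ⟨hv, hvu⟩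
  · obtain rfl : u = 0 := Fin.ext hu
    exact isBridge_spoke hT h hadj
  · obtain rfl : v = 0 := Fin.ext hv
    rw [Sym2.eq_swap]
    exact isBridge_spoke hT h hadj.symm
  · exact isBridge_link hT h hu huv hadj
  · rw [Sym2.eq_swap]
    exact isBridge_link hT h hv hvu hadj.symm

theorem isTree_iff_oneSpokePerBlock (hT : T ≤ fanGraph (m + 1)) :
    T.IsTree ↔ OneSpokePerBlock (SpokeAt T) (LinkAt T) m := by
  refine ⟨fun ⟨hconn, hacyc⟩ p hp => ?_, fun h => ⟨?_, isAcyclic_of_oneSpokePerBlock hT h⟩⟩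
  · obtain ⟨i, hi⟩ := (connected_iff_forall_exists_spokeAt hT).1 hconn p hp
    exact ⟨i, hi, fun i' hi' => eq_of_sameBlock_of_isAcyclic hacyc (hi'.1.trans hi.1.symm) hi'.2 hi.2⟩
  · exact (connected_iff_forall_exists_spokeAt hT).2 fun p hp => (h p hp).exists

theorem not_spokeAt_of_le {p : ℕ} (hp : m ≤ p) : ¬ SpokeAt T p := fun ⟨v, hv, _⟩ => by
  have := v.isLt
  omega

theorem not_linkAt_of_le {p : ℕ} (hp : m ≤ p + 1) : ¬ LinkAt T p := fun ⟨_, v, _, hv, _⟩ => by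
  have := v.isLt
  omega

theorem adj_iff_of_le_fanGraph (hT : T ≤ fanGraph (m + 1)) {u v : Fin (m + 1)} :
    T.Adj u v ↔
      ((u : ℕ) = 0 ∧ (v : ℕ) ≠ 0 ∧ SpokeAt T (v - 1)) ∨
      ((v : ℕ) = 0 ∧ (u : ℕ) ≠ 0 ∧ SpokeAt T (u - 1)) ∨
      ((u : ℕ) ≠ 0 ∧ (u : ℕ) + 1 = v ∧ LinkAt T (u - 1)) ∨
      ((v : ℕ) ≠ 0 ∧ (v : ℕ) + 1 = u ∧ LinkAt T (v - 1)) := by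
  constructor
  · intro h
    rcases fanGraph_adj_iff.1 (hT h) with ⟨hu, hv⟩ | ⟨hv, hu⟩ | ⟨hu, huv⟩ | ⟨hv, hvu⟩
    · obtain rfl : u = 0 := Fin.ext hu
      exact Or.inl ⟨hu, hv, spokeAt_of_adj hv h⟩
    · obtain rfl : v = 0 := Fin.ext hv
      exact Or.inr (Or.inl ⟨hv, hu, spokeAt_of_adj hu h.symm⟩)
    · exact Or.inr (Or.inr (Or.inl ⟨hu, huv, u, v, by omega, by omega, h⟩))
    · exact Or.inr (Or.inr (Or.inr ⟨hv, hvu, v, u, by omega, by omega, h.symm⟩))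
  · rintro (⟨hu, hv, w, hw, h⟩ | ⟨hv, hu, w, hw, h⟩ | ⟨hu, huv, a, b, ha, hb, h⟩ |
      ⟨hv, hvu, a, b, ha, hb, h⟩)
    · rwa [show u = 0 from Fin.ext hu, show v = w from Fin.ext (by omega)]
    · rw [show v = 0 from Fin.ext hv, show u = w from Fin.ext (by omega)]
      exact h.symm
    · rwa [show u = a from Fin.ext (by omega), show v = b from Fin.ext (by omega)]
    · rw [show u = b from Fin.ext (by omega), show v = a from Fin.ext (by omega)]
      exact h.symm

theorem eq_of_le_fanGraph {T' : SimpleGraph (Fin (m + 1))} (hT : T ≤ fanGraph (m + 1))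
    (hT' : T' ≤ fanGraph (m + 1)) (hspoke : ∀ p, SpokeAt T p ↔ SpokeAt T' p)
    (hlink : ∀ p, LinkAt T p ↔ LinkAt T' p) : T = T' := by
  ext u v
  simp only [adj_iff_of_le_fanGraph hT, adj_iff_of_le_fanGraph hT', hspoke, hlink]

end Subgraph

/-- Letters `(s, b)` record whether a path vertex keeps its spoke and whether its block continues
to the next vertex. In state `some q` the current block already has its spoke iff `q`; `none`
rejects. -/
def blockDFA : DFA (Bool × Bool) (Option Bool) where
  step
    | some q, (s, b) =>
      if q && s then none else if b then some (q || s) else if q || s then some false else none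
    | none, _ => none
  start := some false
  accept := {some false}

theorem blockDFA_step_none (a : Bool × Bool) : blockDFA.step none a = none := rfl

theorem blockDFA_step_some (q s b : Bool) :
    blockDFA.step (some q) (s, b) =
      if q && s then none else if b then some (q || s) else if q || s then some false else none :=
  rfl

theorem blockDFA_step_eq_some_false_iff (q : Option Bool) (s : Bool) :
    blockDFA.step q (s, false) = some false ↔ q = some !s := by
  rcases q with _ | q
  · simp [blockDFA_step_none]
  · cases q <;> cases s <;> simp [blockDFA_step_some]

section BlockRun

variable (f : ℕ → Bool × Bool)

def OpenBlockHasSpoke (k : ℕ) : Prop :=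
  ∃ i < k, (∀ l, i ≤ l → l < k → (f l).2) ∧ (f i).1

def LetterFits (j : ℕ) : Prop :=
  ((f j).1 → ¬ OpenBlockHasSpoke f j) ∧ (¬ (f j).2 → OpenBlockHasSpoke f j ∨ (f j).1)

theorem openBlockHasSpoke_succ (k : ℕ) :
    OpenBlockHasSpoke f (k + 1) ↔ (f k).2 ∧ (OpenBlockHasSpoke f k ∨ (f k).1) := by
  constructor
  · rintro ⟨i, hik, hlink, hspoke⟩
    refine ⟨hlink k (by omega) (by omega), ?_⟩
    rcases Nat.lt_succ_iff_lt_or_eq.1 hik with hik | rfl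
    · exact Or.inl ⟨i, hik, fun l h₁ h₂ => hlink l h₁ (by omega), hspoke⟩
    · exact Or.inr hspoke
  · rintro ⟨hk, ⟨i, hik, hlink, hspoke⟩ | hspoke⟩
    · refine ⟨i, by omega, fun l h₁ h₂ => ?_, hspoke⟩
      rcases Nat.lt_succ_iff_lt_or_eq.1 h₂ with h₂ | rfl
      exacts [hlink l h₁ h₂, hk]
    · exact ⟨k, by omega, fun l h₁ h₂ => by rwa [show l = k by omega], hspoke⟩

open Classical in
theorem blockDFA_evalFrom_range (k : ℕ) :
    blockDFA.evalFrom (some false) ((List.range k).map f) =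
      if ∀ j < k, LetterFits f j then some (decide (OpenBlockHasSpoke f k)) else none := by
  induction k with
  | zero => simp [OpenBlockHasSpoke]
  | succ k ih =>
    rw [List.range_succ, List.map_append, DFA.evalFrom_of_append, ih]
    by_cases hk : ∀ j < k, LetterFits f j
    · have hall : (∀ j < k + 1, LetterFits f j) ↔ LetterFits f k := by
        refine ⟨fun h => h k (by omega), fun h j hj => ?_⟩
        rcases Nat.lt_succ_iff_lt_or_eq.1 hj with hj | rfl
        exacts [hk j hj, h]
      rw [if_pos hk]
      simp only [hall]
      rw [openBlockHasSpoke_succ, LetterFits]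
      rcases hfk : f k with ⟨s, b⟩
      by_cases hq : OpenBlockHasSpoke f k <;> cases s <;> cases b <;>
        simp [blockDFA_step_some, hq, hfk]
    · rw [if_neg hk, if_neg (fun h => hk fun j hj => h j (by omega))]
      simp [blockDFA_step_none]

theorem letterFits_of_oneSpokePerBlock {m : ℕ}
    (h : OneSpokePerBlock (fun p => (f p).1) (fun p => (f p).2) m) : ∀ j < m, LetterFits f j := by
  intro j hj
  obtain ⟨i, ⟨hblock, hspoke⟩, huniq⟩ := h j hj
  refine ⟨fun hj' ⟨i', hi', hlink, hspoke'⟩ => ?_, fun hlink => ?_⟩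
  · have h₁ : i' = i := huniq i' ⟨fun l h₁ h₂ => hlink l (by omega) (by omega), hspoke'⟩
    have h₂ : j = i := huniq j ⟨SameBlock.refl _ j, hj'⟩
    omega
  · have hij : i ≤ j := by
      by_contra hij
      exact hlink (hblock j (by omega) (by omega))
    rcases hij.lt_or_eq with hij | rfl
    · exact Or.inl ⟨i, hij, fun l h₁ h₂ => hblock l (by omega) (by omega), hspoke⟩
    · exact Or.inr hspoke

theorem oneSpokePerBlock_of_letterFits {m : ℕ} (hlast : (f (m - 1)).2 = false)
    (h : ∀ j < m, LetterFits f j) : OneSpokePerBlock (fun p => (f p).1) (fun p => (f p).2) m := by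
  intro p hp
  have hend : ∃ e, p ≤ e ∧ (f e).2 = false := ⟨m - 1, by omega, hlast⟩
  obtain ⟨hpe, hclose⟩ := Nat.find_spec hend
  have hopen : ∀ l, p ≤ l → l < Nat.find hend → (f l).2 := fun l h₁ h₂ => by
    simpa [h₁] using Nat.find_min hend h₂
  have hem : Nat.find hend < m := by
    have := Nat.find_min' hend ⟨by omega, hlast⟩
    omega
  have hunique : ∀ i₁ i₂, SameBlock (fun p => (f p).2) i₁ p → (f i₁).1 →
      SameBlock (fun p => (f p).2) i₂ p → (f i₂).1 → ¬ i₁ < i₂ := by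
    intro i₁ i₂ hb₁ hs₁ hb₂ hs₂ hlt
    have hb : SameBlock (fun p => (f p).2) i₁ i₂ := hb₁.trans hb₂.symm
    have hi₂ : i₂ < m := by
      by_contra hi₂
      have := hb₂ (m - 1) (by omega) (by omega)
      simp_all
    exact (h i₂ hi₂).1 hs₂ ⟨i₁, hlt, fun l h₁ h₂ => hb l (by omega) (by omega), hs₁⟩
  obtain ⟨i, hblock, hspoke⟩ : ∃ i, SameBlock (fun p => (f p).2) i p ∧ (f i).1 := by
    rcases (h _ hem).2 (by simp [hclose]) with ⟨i, hi, hlink, hspoke⟩ | hspoke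
    · refine ⟨i, fun l h₁ h₂ => ?_, hspoke⟩
      by_cases hil : i ≤ l
      exacts [hlink l hil (by omega), hopen l (by omega) (by omega)]
    · exact ⟨_, fun l h₁ h₂ => hopen l (by omega) (by omega), hspoke⟩
  refine ⟨i, ⟨hblock, hspoke⟩, fun i' ⟨hblock', hspoke'⟩ => ?_⟩
  have := hunique i i' hblock hspoke hblock' hspoke'
  have := hunique i' i hblock' hspoke' hblock hspoke
  omega

theorem map_range_mem_accepts_iff {m : ℕ} (hlast : (f (m - 1)).2 = false) (hm : 0 < m) :
    (List.range m).map f ∈ blockDFA.accepts ↔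
      OneSpokePerBlock (fun p => (f p).1) (fun p => (f p).2) m := by
  have hclosed : ¬ OpenBlockHasSpoke f m := fun ⟨i, hi, hlink, _⟩ => by
    simpa [hlast] using hlink (m - 1) (by omega) (by omega)
  change blockDFA.evalFrom (some false) _ = some false ↔ _
  rw [blockDFA_evalFrom_range]
  simp only [hclosed, decide_false]
  split_ifs with h
  · exact iff_of_true rfl (oneSpokePerBlock_of_letterFits f hlast h)
  · exact iff_of_false (by simp) (fun h' => h (letterFits_of_oneSpokePerBlock f h'))

end BlockRun

theorem blockDFA_wordCount_none (k : ℕ) (q : Bool) : blockDFA.wordCount k none (some q) = 0 := by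
  induction k with
  | zero => simp [DFA.wordCount]
  | succ k ih => simp [DFA.wordCount, blockDFA_step_none, ih]

theorem blockDFA_wordCount_eq_fib (k : ℕ) :
    blockDFA.wordCount k (some false) (some false) = Nat.fib (2 * k + 1) ∧
    blockDFA.wordCount k (some false) (some true) = Nat.fib (2 * k) ∧
    blockDFA.wordCount k (some true) (some false) = Nat.fib (2 * k) ∧
    blockDFA.wordCount k (some true) (some true) + Nat.fib (2 * k) = Nat.fib (2 * k + 1) := by
  induction k with
  | zero => simp [DFA.wordCount]
  | succ k ih =>
    obtain ⟨hff, hft, htf, htt⟩ := ih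
    have h₁ : Nat.fib (2 * (k + 1)) = Nat.fib (2 * k) + Nat.fib (2 * k + 1) := Nat.fib_add_two
    have h₂ : Nat.fib (2 * (k + 1) + 1) = Nat.fib (2 * k + 1) + Nat.fib (2 * (k + 1)) :=
      Nat.fib_add_two
    simp only [DFA.wordCount, Fintype.sum_prod_type, Fintype.sum_bool, blockDFA_step_some,
      Bool.and_true, Bool.and_false, Bool.true_or, Bool.false_or, Bool.false_eq_true,
      ↓reduceIte, blockDFA_wordCount_none]
    omega

section Code

variable {k : ℕ}

/- A code of a subgraph of `F_{k+2}` lists the letters of the path vertices `1, …, k`, then the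
spoke bit of the last vertex `k + 1`, which has no path edge to its right. -/
def codeLetter (c : (Fin k → Bool × Bool) × Bool) (p : ℕ) : Bool × Bool :=
  if h : p < k then c.1 ⟨p, h⟩ else if p = k then (c.2, false) else (false, false)

def codeWord (c : (Fin k → Bool × Bool) × Bool) : List (Bool × Bool) :=
  List.ofFn c.1 ++ [(c.2, false)]

def ofCode (c : (Fin k → Bool × Bool) × Bool) : SimpleGraph (Fin (k + 2)) :=
  fromRel fun u v => ((u : ℕ) = 0 ∧ (v : ℕ) ≠ 0 ∧ (codeLetter c (v - 1)).1) ∨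
    ((u : ℕ) ≠ 0 ∧ (u : ℕ) + 1 = v ∧ (codeLetter c (u - 1)).2)

open Classical in
noncomputable def toCode (T : SimpleGraph (Fin (k + 2))) : (Fin k → Bool × Bool) × Bool :=
  (fun i => (decide (SpokeAt T i), decide (LinkAt T i)), decide (SpokeAt T k))

theorem codeLetter_of_lt {c : (Fin k → Bool × Bool) × Bool} {p : ℕ} (hp : k < p) :
    codeLetter c p = (false, false) := by
  simp [codeLetter, show ¬ p < k by omega, show p ≠ k by omega]

theorem codeLetter_self_snd (c : (Fin k → Bool × Bool) × Bool) : (codeLetter c k).2 = false := by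
  simp [codeLetter]

theorem codeWord_eq_map_range (c : (Fin k → Bool × Bool) × Bool) :
    codeWord c = (List.range (k + 1)).map (codeLetter c) := by
  rw [List.range_succ, List.map_append, codeWord]
  congr 1
  · refine List.ext_getElem (by simp) fun i h₁ h₂ => ?_
    simp only [List.length_ofFn] at h₁
    simp [codeLetter, h₁]
  · simp [codeLetter]

theorem code_ext {c c' : (Fin k → Bool × Bool) × Bool}
    (h : ∀ p, codeLetter c p = codeLetter c' p) : c = c' := by
  refine Prod.ext (funext fun i => by simpa [codeLetter] using h i) ?_
  simpa [codeLetter] using congrArg Prod.fst (h k)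

theorem ofCode_le (c : (Fin k → Bool × Bool) × Bool) : ofCode c ≤ fanGraph (k + 2) := by
  intro u v h
  simp only [ofCode, fromRel_adj] at h
  rw [fanGraph_adj_iff]
  omega

theorem spokeAt_ofCode (c : (Fin k → Bool × Bool) × Bool) (p : ℕ) :
    SpokeAt (ofCode c) p ↔ (codeLetter c p).1 := by
  constructor
  · rintro ⟨v, hv, h⟩
    simp only [ofCode, fromRel_adj, Fin.val_zero] at h
    rcases h.2 with (⟨-, -, h⟩ | ⟨h₀, -⟩) | (⟨-, h₀, -⟩ | ⟨-, h₀, -⟩)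
    · rwa [show (v : ℕ) - 1 = p by omega] at h
    all_goals omega
  · intro h
    have hp : p ≤ k := by
      by_contra hp
      simp [codeLetter_of_lt (c := c) (show k < p by omega)] at h
    refine ⟨⟨p + 1, by omega⟩, rfl, ?_⟩
    simp only [ofCode, fromRel_adj, Fin.val_zero]
    refine ⟨fun h₀ => by simpa using congrArg Fin.val h₀, Or.inl (Or.inl ⟨by simp, by simp, ?_⟩)⟩
    simpa using h

theorem linkAt_ofCode (c : (Fin k → Bool × Bool) × Bool) (p : ℕ) :
    LinkAt (ofCode c) p ↔ (codeLetter c p).2 := by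
  constructor
  · rintro ⟨u, v, hu, hv, h⟩
    simp only [ofCode, fromRel_adj] at h
    rcases h.2 with (⟨h₀, -⟩ | ⟨-, -, h⟩) | (⟨h₀, -⟩ | ⟨-, h₀, -⟩)
    · omega
    · rwa [show (u : ℕ) - 1 = p by omega] at h
    all_goals omega
  · intro h
    have hp : p < k := by
      by_contra hp
      rcases (show p = k ∨ k < p by omega) with rfl | hp
      · simp [codeLetter_self_snd] at h
      · simp [codeLetter_of_lt (c := c) hp] at h
    refine ⟨⟨p + 1, by omega⟩, ⟨p + 2, by omega⟩, rfl, rfl, ?_⟩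
    simp only [ofCode, fromRel_adj]
    refine ⟨fun h₀ => by simpa using congrArg Fin.val h₀, Or.inl (Or.inr ⟨by simp, by simp, ?_⟩)⟩
    simpa using h

theorem codeLetter_toCode_fst (T : SimpleGraph (Fin (k + 2))) (p : ℕ) :
    (codeLetter (toCode T) p).1 ↔ SpokeAt T p := by
  rcases lt_trichotomy p k with hp | rfl | hp
  · simp [codeLetter, toCode, hp]
  · simp [codeLetter, toCode]
  · simp [codeLetter_of_lt hp, not_spokeAt_of_le (T := T) (show k + 1 ≤ p by omega)]

theorem codeLetter_toCode_snd (T : SimpleGraph (Fin (k + 2))) (p : ℕ) :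
    (codeLetter (toCode T) p).2 ↔ LinkAt T p := by
  rcases lt_trichotomy p k with hp | rfl | hp
  · simp [codeLetter, toCode, hp]
  · simpa [codeLetter] using not_linkAt_of_le le_rfl
  · simp [codeLetter_of_lt hp, not_linkAt_of_le (T := T) (show k + 1 ≤ p + 1 by omega)]

noncomputable def fanSubgraphEquiv (k : ℕ) :
    {T : SimpleGraph (Fin (k + 2)) // T ≤ fanGraph (k + 2)} ≃ (Fin k → Bool × Bool) × Bool where
  toFun T := toCode T.1
  invFun c := ⟨ofCode c, ofCode_le c⟩
  left_inv T := Subtype.ext <| eq_of_le_fanGraph (ofCode_le _) T.2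
    (fun p => by rw [spokeAt_ofCode, codeLetter_toCode_fst])
    (fun p => by rw [linkAt_ofCode, codeLetter_toCode_snd])
  right_inv c := code_ext fun p => Prod.ext
    (Bool.eq_iff_iff.2 (by rw [codeLetter_toCode_fst, spokeAt_ofCode]))
    (Bool.eq_iff_iff.2 (by rw [codeLetter_toCode_snd, linkAt_ofCode]))

theorem isTree_iff_codeWord_mem_accepts {T : SimpleGraph (Fin (k + 2))}
    (hT : T ≤ fanGraph (k + 2)) : T.IsTree ↔ codeWord (toCode T) ∈ blockDFA.accepts := by
  rw [isTree_iff_oneSpokePerBlock hT, codeWord_eq_map_range,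
    map_range_mem_accepts_iff _ (by simpa using codeLetter_self_snd _) (by omega)]
  simp only [codeLetter_toCode_fst, codeLetter_toCode_snd]

theorem card_codeWord_mem_accepts (k : ℕ) :
    Nat.card {c : (Fin k → Bool × Bool) × Bool // codeWord c ∈ blockDFA.accepts} =
      Nat.fib (2 * k + 2) := by
  have hclose (w : Fin k → Bool × Bool) (s : Bool) :
      codeWord (w, s) ∈ blockDFA.accepts ↔
        blockDFA.evalFrom (some false) (List.ofFn w) = some !s := by
    rw [DFA.mem_accepts, codeWord, DFA.eval_append_singleton]
    exact blockDFA_step_eq_some_false_iff _ _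
  let e : {c : (Fin k → Bool × Bool) × Bool // codeWord c ∈ blockDFA.accepts} ≃
      Σ s : Bool, {w : Fin k → Bool × Bool // codeWord (w, s) ∈ blockDFA.accepts} :=
    (Equiv.subtypeEquiv (Equiv.prodComm _ _) fun _ => Iff.rfl).trans
      (Equiv.subtypeProdEquivSigmaSubtype fun s w => codeWord (w, s) ∈ blockDFA.accepts)
  rw [Nat.card_congr e, Nat.card_sigma, Fintype.sum_bool]
  simp only [hclose, DFA.card_evalFrom_eq_wordCount, Bool.not_true, Bool.not_false]
  obtain ⟨hff, hft, -, -⟩ := blockDFA_wordCount_eq_fib k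
  rw [hff, hft, Nat.fib_add_two, add_comm]

end Code

end FanGraph

theorem fan_spanning_tree_count (n : ℕ) (hn : 2 ≤ n) :
    numSpanningTrees n = Nat.fib (2 * (n - 1)) := by
  obtain ⟨k, rfl⟩ : ∃ k, n = k + 2 := ⟨n - 2, by omega⟩
  let e : {T // IsSpanningTree (fanGraph (k + 2)) T} ≃
      {c // FanGraph.codeWord c ∈ FanGraph.blockDFA.accepts} :=
    (Equiv.subtypeSubtypeEquivSubtypeInter _ _).symm.trans <|
      (FanGraph.fanSubgraphEquiv k).subtypeEquiv fun T =>
        FanGraph.isTree_iff_codeWord_mem_accepts T.2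
  rw [numSpanningTrees, Nat.card_congr e, FanGraph.card_codeWord_mem_accepts]
  congr 1
end

section
/- For n ≥ 3, the spanning trees of the fan graph F_n that contain the edge v_n v_{n−1} but not the edge v_n v_∞ are in bijection with the spanning trees of F_{n−1}, via deleting the vertex v_n (and the edge v_n v_{n−1}). -/
/-!
Deleting a leaf `v` whose only neighbour is `w` turns a spanning tree of `G` into a spanning tree
of `G - v`, and re-attaching `v` by the edge `vw` undoes this. In `F_n` the only neighbours of
`v_n` are `v_{n-1}` and `v_∞`, so a spanning tree containing `v_n v_{n-1}` but not `v_n v_∞` is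
exactly one in which `v_n` is a leaf at `v_{n-1}`; and `F_n - v_n = F_{n-1}`.

A vertex with a single neighbour lies on no cycle, and on no path between two other vertices,
so a graph with such a vertex is a tree exactly when it is one after deleting that vertex.
-/

open SimpleGraph

namespace SimpleGraph

variable {V V' : Type*} {G T : SimpleGraph V} {v w : V}

lemma Walk.IsCycle.notMem_support_of_subsingleton_neighborSet {u : V} {c : G.Walk u u}
    (hc : c.IsCycle) (hv : (G.neighborSet v).Subsingleton) : v ∉ c.support := by
  classical
  intro hvc
  have hr := hc.rotate hvc
  have hnil : ¬ (c.rotate v hvc).Nil := hr.not_nil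
  exact hr.snd_ne_penultimate
    (hv ((c.rotate v hvc).adj_snd hnil) ((c.rotate v hvc).adj_penultimate hnil).symm)

lemma IsAcyclic.of_induce_compl_singleton (hv : (G.neighborSet v).Subsingleton)
    (h : (G.induce {v}ᶜ).IsAcyclic) : G.IsAcyclic := by
  intro u c hc
  have hs : ∀ x ∈ c.support, x ∈ ({v}ᶜ : Set V) := fun x hx hxv =>
    hc.notMem_support_of_subsingleton_neighborSet hv (hxv ▸ hx)
  refine h (c.induce _ hs) ((Walk.isCycle_map_iff_of_injective
    (f := (Embedding.induce _).toHom) Subtype.val_injective).mp ?_)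
  rwa [Walk.map_induce]

lemma isTree_iff_induce_compl_singleton (hvw : G.neighborSet v = {w}) :
    G.IsTree ↔ (G.induce {v}ᶜ).IsTree := by
  have hadj : G.Adj v w := by simp [← mem_neighborSet, hvw]
  have hw : w ∈ ({v}ᶜ : Set V) := hadj.ne.symm
  have hleaf : (G.neighborSet v).Subsingleton := hvw ▸ Set.subsingleton_singleton
  constructor
  · intro hG
    have hconn : (G.induce {v}ᶜ).Preconnected :=
      hG.preconnected.induce_of_degree_eq_one fun x hx => by
        rwa [Set.notMem_compl_iff.mp hx]
    exact ⟨(connected_iff _).mpr ⟨hconn, ⟨⟨w, hw⟩⟩⟩, hG.isAcyclic.induce _⟩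
  · intro hT
    have hreach : ∀ x, G.Reachable x w := by
      intro x
      by_cases hx : x = v
      · exact hx ▸ hadj.reachable
      · exact (hT.preconnected ⟨x, hx⟩ ⟨w, hw⟩).map (Embedding.induce _).toHom
    exact ⟨(connected_iff _).mpr ⟨fun x y => (hreach x).trans (hreach y).symm, ⟨w⟩⟩,
      hT.isAcyclic.of_induce_compl_singleton hleaf⟩

lemma neighborSet_eq_singleton_iff_of_le {u : V} (hT : T ≤ G)
    (hG : ∀ x, G.Adj v x → x = u ∨ x = w) (huw : u ≠ w) :
    T.neighborSet v = {w} ↔ T.Adj v w ∧ ¬T.Adj v u := by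
  constructor
  · intro h
    simp only [← mem_neighborSet, h, Set.mem_singleton_iff]
    exact ⟨trivial, huw⟩
  · rintro ⟨hw, hu⟩
    ext x
    rw [mem_neighborSet, Set.mem_singleton_iff]
    refine ⟨fun hx => ?_, fun hx => hx ▸ hw⟩
    rcases hG x (hT hx) with rfl | rfl
    · exact absurd hx hu
    · rfl

variable {f : V' ↪ V}

lemma isTree_comap_iff_of_neighborSet_eq_singleton (hf : Set.range f = {v}ᶜ)
    (hvw : T.neighborSet v = {w}) : (T.comap f).IsTree ↔ T.IsTree := by
  rw [(Embedding.isoInduceRange (Embedding.comap f T)).isTree_iff,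
    isTree_iff_induce_compl_singleton hvw]
  exact hf ▸ Iff.rfl

lemma comap_map_sup_edge (hv : v ∉ Set.range f) (T' : SimpleGraph V') :
    (T'.map f ⊔ edge v w).comap f = T' := by
  ext a b
  simp only [comap_adj, sup_adj, edge_adj, map_adj_apply]
  grind

lemma neighborSet_map_sup_edge (hv : v ∉ Set.range f) (hvw : v ≠ w) (T' : SimpleGraph V') :
    (T'.map f ⊔ edge v w).neighborSet v = {w} := by
  ext x
  simp only [mem_neighborSet, sup_adj, edge_adj, map_adj, Set.mem_singleton_iff]
  grind

lemma map_comap_sup_edge (hf : Set.range f = {v}ᶜ) (hvw : T.neighborSet v = {w}) :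
    (T.comap f).map f ⊔ edge v w = T := by
  have hleaf : ∀ x, T.Adj v x ↔ x = w := fun x => by
    rw [← mem_neighborSet, hvw, Set.mem_singleton_iff]
  have hrange : ∀ x, x ≠ v → ∃ a, f a = x := fun x hx => by
    rwa [← Set.mem_range, hf]
  ext x y
  simp only [sup_adj, map_adj, comap_adj, edge_adj]
  constructor
  · rintro (⟨a, b, h, rfl, rfl⟩ | ⟨⟨rfl, rfl⟩ | ⟨rfl, rfl⟩, -⟩)
    · exact h
    · exact (hleaf _).2 rfl
    · exact ((hleaf _).2 rfl).symm
  · intro h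
    by_cases hx : x = v
    · exact Or.inr ⟨Or.inl ⟨hx, (hleaf y).1 (hx ▸ h)⟩, h.ne⟩
    by_cases hy : y = v
    · exact Or.inr ⟨Or.inr ⟨(hleaf x).1 (hy ▸ h.symm), hy⟩, h.ne⟩
    obtain ⟨a, rfl⟩ := hrange x hx
    obtain ⟨b, rfl⟩ := hrange y hy
    exact Or.inl ⟨a, b, h, rfl, rfl⟩

variable (f) in
/-- `f` identifies `V'` with the vertices other than `v`, so `G.comap f` is `G - v`. -/
def spanningTreeDeleteLeafEquiv (hf : Set.range f = {v}ᶜ) (hG : G.Adj v w) :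
    {T // IsSpanningTree G T ∧ T.neighborSet v = {w}} ≃ {T' // IsSpanningTree (G.comap f) T'} :=
  have hv : v ∉ Set.range f := by simp [hf]
  { toFun T := ⟨T.1.comap f, comap_monotone f T.2.1.1,
      (isTree_comap_iff_of_neighborSet_eq_singleton hf T.2.2).2 T.2.1.2⟩
    invFun T' := ⟨T'.1.map f ⊔ edge v w,
      ⟨sup_le ((map_le_iff_le_comap _ _ _).2 T'.2.1) ((edge_le_iff G).2 (Or.inr hG)),
        (isTree_comap_iff_of_neighborSet_eq_singleton hf (neighborSet_map_sup_edge hv hG.ne _)).1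
          (by rw [comap_map_sup_edge hv]; exact T'.2.2)⟩,
      neighborSet_map_sup_edge hv hG.ne _⟩
    left_inv T := Subtype.ext (map_comap_sup_edge hf T.2.2)
    right_inv T' := Subtype.ext (comap_map_sup_edge hv _) }

end SimpleGraph

lemma fanGraph_comap_castLE {m n : ℕ} (h : m ≤ n) :
    (fanGraph n).comap (Fin.castLE h) = fanGraph m := by
  ext
  simp [fanGraph]

lemma range_castLEEmb_sub_one {n : ℕ} (hn : 0 < n) :
    Set.range (Fin.castLEEmb (n.sub_le 1)) = {⟨n - 1, by omega⟩}ᶜ := by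
  ext x
  simp only [Fin.coe_castLEEmb, Fin.range_castLE, Set.mem_ofPred_eq, Set.mem_compl_iff,
    Set.mem_singleton_iff, Fin.ext_iff]
  omega

lemma fanGraph_adj_iff_of_val_eq_sub_one {n : ℕ} (hn : 2 ≤ n) {x y : Fin n}
    (hx : (x : ℕ) = n - 1) : (fanGraph n).Adj x y ↔ (y : ℕ) = 0 ∨ (y : ℕ) = n - 2 := by
  simp only [fanGraph, fromRel_adj, ne_eq, Fin.ext_iff]
  omega

theorem fan_bijection_path_edge (n : ℕ) (hn : 3 ≤ n) :
    ∃ e : {T : SimpleGraph (Fin n) // IsSpanningTree (fanGraph n) T ∧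
            T.Adj ⟨n - 1, by omega⟩ ⟨n - 2, by omega⟩ ∧
            ¬ T.Adj ⟨n - 1, by omega⟩ ⟨0, by omega⟩} ≃
          {T' : SimpleGraph (Fin (n - 1)) // IsSpanningTree (fanGraph (n - 1)) T'},
      ∀ T, (e T : SimpleGraph (Fin (n - 1))) =
        SimpleGraph.comap (Fin.castLE (by omega)) (T : SimpleGraph (Fin n)) := by
  have hfan : ∀ x, (fanGraph n).Adj ⟨n - 1, by omega⟩ x →
      x = ⟨0, by omega⟩ ∨ x = ⟨n - 2, by omega⟩ := fun x hx => by
    simpa [Fin.ext_iff] using (fanGraph_adj_iff_of_val_eq_sub_one (by omega) rfl).1 hx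
  have hadj : (fanGraph n).Adj ⟨n - 1, by omega⟩ ⟨n - 2, by omega⟩ :=
    (fanGraph_adj_iff_of_val_eq_sub_one (by omega) rfl).2 (Or.inr rfl)
  have hleaf : ∀ T, IsSpanningTree (fanGraph n) T →
      (T.neighborSet ⟨n - 1, by omega⟩ = {⟨n - 2, by omega⟩} ↔
        T.Adj ⟨n - 1, by omega⟩ ⟨n - 2, by omega⟩ ∧ ¬ T.Adj ⟨n - 1, by omega⟩ ⟨0, by omega⟩) :=
    fun T hT => neighborSet_eq_singleton_iff_of_le hT.1 hfan (by simp [Fin.ext_iff]; omega)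
  refine ⟨(Equiv.subtypeEquivRight fun T => and_congr_right fun hT => (hleaf T hT).symm).trans
    ((spanningTreeDeleteLeafEquiv _ (range_castLEEmb_sub_one (by omega)) hadj).trans
      (Equiv.subtypeEquivRight fun T' => by rw [Fin.coe_castLEEmb, fanGraph_comap_castLE])),
    fun T => rfl⟩
end

section
/- For all n ≥ 1, the sum over all compositions (c_1, ..., c_k) of n of the product c_1·c_2·⋯·c_k equals the Fibonacci number f_{2n}, where f_1 = f_2 = 1. -/
/-!
Splitting off the first block, of size `i + 1`, shows that `a n = ∑_{c ⊨ n} ∏ cᵢ` satisfies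
`a 0 = 1` and `a (n + 1) = ∑_{i + j = n} (i + 1) a j`. Since the weights `i + 1` are partial
sums of ones, this gives `a (n + 2) = a (n + 1) + (a 0 + ⋯ + a (n + 1))`, and an induction that
carries `a 0 + ⋯ + a n = f (2n + 1)` along yields `a n = f (2n)` for `n ≥ 1`.
-/

open Finset

namespace Composition

variable {n : ℕ}

lemma blocks_ne_nil (c : Composition (n + 1)) : c.blocks ≠ [] := by
  intro h
  simpa [h] using c.blocks_sum

lemma head_add_sum_tail (c : Composition (n + 1)) :
    c.blocks.head c.blocks_ne_nil + c.blocks.tail.sum = n + 1 := by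
  rw [← List.sum_cons, List.cons_head_tail, c.blocks_sum]

def consEquiv (n : ℕ) :
    (Σ p : antidiagonal n, Composition p.1.2) ≃ Composition (n + 1) where
  toFun p := ⟨(p.1.1.1 + 1) :: p.2.blocks, by
      rintro i (_ | ⟨_, hi⟩)
      exacts [Nat.succ_pos _, p.2.blocks_pos hi], by
      have := HasAntidiagonal.mem_antidiagonal.1 p.1.2
      simp only [List.sum_cons, p.2.blocks_sum]
      omega⟩
  invFun c :=
    ⟨⟨(c.blocks.head c.blocks_ne_nil - 1, c.blocks.tail.sum), by
        have := c.one_le_blocks (List.head_mem c.blocks_ne_nil)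
        have := c.head_add_sum_tail
        rw [HasAntidiagonal.mem_antidiagonal]
        omega⟩,
      ⟨c.blocks.tail, fun hi ↦ c.blocks_pos (List.mem_of_mem_tail hi), rfl⟩⟩
  left_inv := by
    rintro ⟨⟨⟨i, j⟩, hij⟩, ⟨l, _, hsum⟩⟩
    obtain rfl : l.sum = j := hsum
    rfl
  right_inv c := by
    ext1
    simp only
    rw [Nat.sub_add_cancel (c.one_le_blocks (List.head_mem c.blocks_ne_nil)),
      List.cons_head_tail]

theorem sum_blocks_succ {M : Type*} [AddCommMonoid M] (f : List ℕ → M) (n : ℕ) :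
    ∑ c : Composition (n + 1), f c.blocks =
      ∑ p ∈ antidiagonal n, ∑ c : Composition p.2, f ((p.1 + 1) :: c.blocks) := by
  rw [← (consEquiv n).sum_comp, Fintype.sum_sigma, ← sum_coe_sort (antidiagonal n)]
  rfl

lemma sum_prod_blocks_zero : ∑ c : Composition 0, c.blocks.prod = 1 := by
  have (c : Composition 0) : c.blocks = [] :=
    List.eq_nil_of_length_eq_zero (by simp)
  simp [this, composition_card]

lemma sum_prod_blocks_succ (n : ℕ) :
    ∑ c : Composition (n + 1), c.blocks.prod =
      ∑ p ∈ antidiagonal n, (p.1 + 1) * ∑ c : Composition p.2, c.blocks.prod := by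
  simp only [sum_blocks_succ, List.prod_cons, mul_sum]

end Composition

lemma Finset.Nat.sum_antidiagonal_succ_fst_add_one_smul {M : Type*} [AddCommMonoid M]
    (g : ℕ → M) (n : ℕ) :
    ∑ p ∈ antidiagonal (n + 1), (p.1 + 1) • g p.2 =
      ∑ p ∈ antidiagonal n, (p.1 + 1) • g p.2 + ∑ j ∈ range (n + 2), g j := by
  have hsnd : ∑ p ∈ antidiagonal n, g p.2 = ∑ j ∈ range (n + 1), g j := by
    rw [← Nat.sum_antidiagonal_swap]
    exact Nat.sum_antidiagonal_eq_sum_range_succ (fun i _ ↦ g i) n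
  rw [Nat.sum_antidiagonal_succ, sum_range_succ, ← hsnd]
  simp only [add_smul, one_smul, zero_add, sum_add_distrib]
  abel

theorem Nat.eq_fib_two_mul_of_sum_antidiagonal_rec (a : ℕ → ℕ) (h0 : a 0 = 1)
    (hsucc : ∀ n, a (n + 1) = ∑ p ∈ antidiagonal n, (p.1 + 1) * a p.2) (n : ℕ) :
    a (n + 1) = fib (2 * (n + 1)) := by
  suffices ∀ n, a (n + 1) = fib (2 * n + 2) ∧ ∑ j ∈ range (n + 2), a j = fib (2 * n + 3) from
    (this n).1
  intro n
  induction n with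
  | zero => simp [hsucc, h0, sum_range_succ, fib_add_two]
  | succ n ih =>
    obtain ⟨ha, hpartial⟩ := ih
    have hconv := Finset.Nat.sum_antidiagonal_succ_fst_add_one_smul a n
    simp only [smul_eq_mul, ← hsucc] at hconv
    have ha' : a (n + 2) = fib (2 * n + 4) := by
      rw [hconv, ha, hpartial]
      exact fib_add_two.symm
    refine ⟨ha', ?_⟩
    rw [sum_range_succ, hpartial, ha']
    exact fib_add_two.symm

theorem composition_prod_sum_eq_fib (n : ℕ) (hn : 1 ≤ n) :
    ∑ c : Composition n, c.blocks.prod = Nat.fib (2 * n) := by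
  obtain ⟨m, rfl⟩ := Nat.exists_eq_add_of_le' hn
  exact Nat.eq_fib_two_mul_of_sum_antidiagonal_rec (fun n ↦ ∑ c : Composition n, c.blocks.prod)
    Composition.sum_prod_blocks_zero Composition.sum_prod_blocks_succ m
end
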